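/- arXiv:2206.11756 — 2 statements merged into one kernel-verified Lean document; each statement's English description precedes it below -/
import Mathlib

section
/- Let p, q ∈ ℕ be such that q is odd and p > q > 0. Then in the symmetric group S_p, both products [p][q] and [q][p] are cycles of length p (i.e., each is a cyclic permutation moving all p points). -/
/-- The cyclic permutation `[n] = (1,2,…,n)` considered as an element of the symmetric
group `S_p` on the `p` points `{0,…,p-1}` (written 0-indexed): it maps `i ↦ i + 1` for
`i < n - 1`, maps `n - 1 ↦ 0` and fixes all points `n, …, p - 1`. -/
def cyc (p n : ℕ) : Equiv.Perm (Fin p) :=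
  if h : n - 1 < p then Fin.cycleRange ⟨n - 1, h⟩ else 1

/-!
Under `[p][q]` (first `[p]`, then `[q]`) the orbit of `0` runs through the even points
`0, 2, …, q - 1`, then `q, q + 1, …, p - 1`, and then the odd points `1, 3, …, q - 2`
before returning to `0`; oddness of `q` is what makes the even points end exactly at
`q - 1`. This enumeration of all `p` points conjugates `[p][q]` to the standard `p`-cycle
`finRotate p`, and `[q][p]` is conjugate to `[p][q]`.
-/

open Equiv Function

theorem Equiv.Perm.isCycle_and_card_support_of_mul_eq_mul_finRotate {n : ℕ} (hn : 2 ≤ n)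
    {f e : Perm (Fin n)} (h : f * e = e * finRotate n) :
    f.IsCycle ∧ f.support.card = n := by
  rw [eq_mul_inv_of_mul_eq h, Perm.card_support_conj, support_finRotate_of_le hn,
    Finset.card_univ, Fintype.card_fin]
  exact ⟨(isCycle_finRotate_of_le hn).conj, rfl⟩

theorem val_finRotate {n : ℕ} (i : Fin n) : (finRotate n i : ℕ) = (i + 1) % n := by
  obtain ⟨m, rfl⟩ : ∃ m, n = m + 1 := ⟨n - 1, by have := i.pos; omega⟩
  rw [coe_finRotate]
  split_ifs with h
  · simp [h]
  · rw [Nat.mod_eq_of_lt (by have := Fin.val_lt_last h; omega)]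

theorem val_cyc_apply {p n : ℕ} (hn : n ≤ p) (x : Fin p) :
    (cyc p n x : ℕ) = if x.val + 1 < n then x.val + 1 else if x.val + 1 = n then 0 else x.val := by
  have hx := x.isLt
  rw [cyc, dif_pos (by omega)]
  by_cases h : x ≤ ⟨n - 1, by omega⟩
  · rw [Fin.coe_cycleRange_of_le h]
    simp only [Fin.le_def, Fin.ext_iff] at h ⊢
    split_ifs <;> omega
  · rw [Fin.cycleRange_of_gt (not_le.mp h)]
    simp only [Fin.le_def] at h
    split_ifs <;> omega

/-- The `k`-th point (`k < p`) of the orbit of `0` under `[p][q]` for odd `q`. -/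
def cycOrbit (p q k : ℕ) : ℕ :=
  if k ≤ q / 2 then 2 * k
  else if k ≤ q / 2 + (p - q) then k + q / 2
  else 2 * (k - (q / 2 + (p - q))) - 1

section

variable {p q : ℕ}

theorem cycOrbit_lt (hq : Odd q) (hqp : q < p) {k : ℕ} (hk : k < p) : cycOrbit p q k < p := by
  rw [Nat.odd_iff] at hq
  unfold cycOrbit
  split_ifs <;> omega

theorem exists_cycOrbit_eq (hq : Odd q) (hqp : q < p) {y : ℕ} (hy : y < p) :
    ∃ k < p, cycOrbit p q k = y := by
  rw [Nat.odd_iff] at hq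
  by_cases h_even : y % 2 = 0 ∧ y < q
  · exact ⟨y / 2, by omega, by unfold cycOrbit; split_ifs <;> omega⟩
  by_cases h_top : q - 1 ≤ y
  · exact ⟨y - q / 2, by omega, by unfold cycOrbit; split_ifs <;> omega⟩
  · exact ⟨q / 2 + (p - q) + (y + 1) / 2, by omega, by unfold cycOrbit; split_ifs <;> omega⟩

theorem cyc_cyc_cycOrbit (hq : Odd q) (hqp : q < p) {k : ℕ} (hk : k < p) :
    (cyc p q (cyc p p ⟨cycOrbit p q k, cycOrbit_lt hq hqp hk⟩) : ℕ) =
      cycOrbit p q ((k + 1) % p) := by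
  rw [Nat.odd_iff] at hq
  rw [val_cyc_apply hqp.le, val_cyc_apply le_rfl]
  have hmod : (k + 1) % p = if k + 1 < p then k + 1 else 0 := by
    split_ifs with hk'
    · exact Nat.mod_eq_of_lt hk'
    · rw [show k + 1 = p by omega, Nat.mod_self]
  rw [hmod]
  simp only [cycOrbit]
  split_ifs <;> omega

noncomputable def cycOrbitPerm (hq : Odd q) (hqp : q < p) : Perm (Fin p) :=
  Equiv.ofBijective (fun k => ⟨cycOrbit p q k, cycOrbit_lt hq hqp k.isLt⟩)
    (Surjective.bijective_of_finite fun y =>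
      let ⟨k, hk, hky⟩ := exists_cycOrbit_eq hq hqp y.isLt
      ⟨⟨k, hk⟩, Fin.ext hky⟩)

theorem cyc_mul_cyc_mul_cycOrbitPerm (hq : Odd q) (hqp : q < p) :
    cyc p q * cyc p p * cycOrbitPerm hq hqp = cycOrbitPerm hq hqp * finRotate p := by
  ext k
  simp only [Perm.mul_apply, cycOrbitPerm, ofBijective_apply]
  rw [cyc_cyc_cycOrbit hq hqp k.isLt, val_finRotate]

end

theorem cyc_mul_cyc_isCycle_general (p q : ℕ) (hq_odd : Odd q) (hqp : q < p) :
    ((cyc p q * cyc p p).IsCycle ∧ (cyc p q * cyc p p).support.card = p) ∧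
    ((cyc p p * cyc p q).IsCycle ∧ (cyc p p * cyc p q).support.card = p) := by
  have hp : 2 ≤ p := by have := hq_odd.pos; omega
  obtain ⟨hcyc, hcard⟩ := Perm.isCycle_and_card_support_of_mul_eq_mul_finRotate hp
    (cyc_mul_cyc_mul_cycOrbitPerm hq_odd hqp)
  have hconj : cyc p p * cyc p q = cyc p p * (cyc p q * cyc p p) * (cyc p p)⁻¹ := by group
  rw [hconj, Perm.card_support_conj]
  exact ⟨⟨hcyc, hcard⟩, hcyc.conj, hcard⟩

/-- Let `p, q ∈ ℕ` with `q` odd and `p > q > 0`. Then in `S_p` both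
products `[p][q]` and `[q][p]` (multiplied left to right, so the paper's `[p][q]`
is `cyc p q * cyc p p` in Mathlib's convention `(f * g) x = f (g x)`) are cycles of
length `p`. -/
theorem cyc_mul_cyc_isCycle (p q : ℕ) (hq_odd : Odd q) (hqp : q < p) (hq0 : 0 < q) :
    ((cyc p q * cyc p p).IsCycle ∧ (cyc p q * cyc p p).support.card = p) ∧
    ((cyc p p * cyc p q).IsCycle ∧ (cyc p p * cyc p q).support.card = p) :=
  cyc_mul_cyc_isCycle_general p q hq_odd hqp
end

section
/- Let p, q ∈ ℕ be primes with 2 < q < p and let x₁, x₂ ∈ ℤ. If [p]^{−x₂}[q]^{x₁} = [q]^{x₁}[p]^{−x₂} holds in S_p and x₁ ≢ 0 (mod q), then x₂ ≡ 0 (mod p). -/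
open Equiv Perm

theorem Commute.of_zpow_right_of_gcd_eq_one {G : Type*} [Group G] {a b : G} {k : ℤ}
    (hk : k.gcd (orderOf b) = 1) (h : Commute a (b ^ k)) : Commute a b := by
  obtain ⟨u, hu⟩ := Subgroup.mem_zpowers_iff.mp (mem_zpowers_zpow_iff.mpr hk)
  exact hu ▸ h.zpow_right u

theorem Equiv.Perm.eq_one_of_commute_of_apply_eq_self {α : Type*} {σ τ : Perm α} {x : α}
    (hσ : ∀ y, σ.SameCycle x y) (hcomm : Commute τ σ) (hx : τ x = x) : τ = 1 := by
  ext y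
  obtain ⟨k, rfl⟩ := hσ y
  rw [one_apply, ← mul_apply, (hcomm.zpow_right k).eq, mul_apply, hx]

theorem Equiv.Perm.sameCycle_finRotate {n : ℕ} (hn : 2 ≤ n) (i j : Fin n) :
    (finRotate n).SameCycle i j :=
  have hmoves (k : Fin n) : finRotate n k ≠ k :=
    mem_support.mp (support_finRotate_of_le hn ▸ Finset.mem_univ k)
  (isCycle_finRotate_of_le hn).sameCycle (hmoves i) (hmoves j)

theorem cyc_self (n : ℕ) : cyc n n = finRotate n := by
  cases n with
  | zero => rfl
  | succ m => rw [cyc, dif_pos (by omega)]; exact Fin.cycleRange_last m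

theorem cyc_apply_of_le {p n : ℕ} (hn : 0 < n) {i : Fin p} (hi : n ≤ i) : cyc p n i = i := by
  unfold cyc
  split_ifs
  · exact Fin.cycleRange_of_gt (Fin.lt_def.2 (by simp only; omega))
  · rfl

theorem orderOf_cyc {p n : ℕ} (hn : 2 ≤ n) (hnp : n ≤ p) : orderOf (cyc p n) = n := by
  have : NeZero p := ⟨by omega⟩
  rw [cyc, dif_pos (by omega), ← lcm_cycleType,
    Fin.cycleType_cycleRange (Fin.ne_of_val_ne (by simp only [Fin.val_zero]; omega))]
  simp only [Multiset.lcm_singleton, normalize_eq]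
  omega

theorem cyc_commute_imp_modEq_general (p q : ℕ) (hp : p.Prime) (hq : q.Prime)
    (hqp : q < p) (x₁ x₂ : ℤ)
    (hcomm : (cyc p q) ^ x₁ * (cyc p p) ^ (-x₂) = (cyc p p) ^ (-x₂) * (cyc p q) ^ x₁)
    (hx₁ : ¬ x₁ ≡ 0 [ZMOD (q : ℤ)]) :
    x₂ ≡ 0 [ZMOD (p : ℤ)] := by
  rw [Int.modEq_zero_iff_dvd] at hx₁ ⊢
  by_contra hx₂
  have hgcd : (-x₂).gcd (orderOf (cyc p p)) = 1 := by
    rw [orderOf_cyc hp.two_le le_rfl, Int.neg_gcd, ← Int.isCoprime_iff_gcd_eq_one]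
    exact ((Nat.prime_iff_prime_int.mp hp).coprime_iff_not_dvd.2 hx₂).symm
  have hcomm' : Commute (cyc p q ^ x₁) (cyc p p) := Commute.of_zpow_right_of_gcd_eq_one hgcd hcomm
  let last : Fin p := ⟨p - 1, by omega⟩
  have hfix : (cyc p q ^ x₁) last = last :=
    zpow_apply_eq_self_of_apply_eq_self (cyc_apply_of_le hq.pos (by simp only [last]; omega)) x₁
  have hone : cyc p q ^ x₁ = 1 := eq_one_of_commute_of_apply_eq_self
    (cyc_self p ▸ sameCycle_finRotate hp.two_le last) hcomm' hfix
  exact hx₁ (orderOf_cyc hq.two_le hqp.le ▸ orderOf_dvd_iff_zpow_eq_one.2 hone)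

/-- Let `p, q` be primes with `2 < q < p` and `x₁, x₂ ∈ ℤ`.
If `[p]^{−x₂}[q]^{x₁} = [q]^{x₁}[p]^{−x₂}` holds in `S_p` (products taken left to
right, so a paper product `a b` is `b * a` in Mathlib's convention
`(f * g) x = f (g x)`) and `x₁ ≢ 0 (mod q)`, then `x₂ ≡ 0 (mod p)`. -/
theorem cyc_commute_imp_modEq (p q : ℕ) (hp : p.Prime) (hq : q.Prime) (h2q : 2 < q)
    (hqp : q < p) (x₁ x₂ : ℤ)
    (hcomm : (cyc p q) ^ x₁ * (cyc p p) ^ (-x₂) = (cyc p p) ^ (-x₂) * (cyc p q) ^ x₁)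
    (hx₁ : ¬ x₁ ≡ 0 [ZMOD (q : ℤ)]) :
    x₂ ≡ 0 [ZMOD (p : ℤ)] :=
  cyc_commute_imp_modEq_general p q hp hq hqp x₁ x₂ hcomm hx₁
end
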